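/- arXiv:2512.22246 — 4 statements merged into one kernel-verified Lean document; each statement's English description precedes it below -/
import Mathlib

section
/- (Theorem 2.1) Let n ∈ ℕ, η : Fin n → Fin n → ℝ with 0 ≤ η h k ≤ η̄ for some η̄ > 0, B : Fin n → Fin n → Fin n → ℝ with ∑_i B i h k = 1 for all h,k, Γ : Fin n → Fin n → ℝ → ℝ with each Γ i h continuous, and let f⁰ ∈ (Fin n → ℝ) have all components strictly positive. Then there exist t₀ > 0 and a unique differentiable function f : [0, t₀] → (Fin n → ℝ) with f(0) = f⁰ satisfying, for all t ∈ [0, t₀] and all i, d f_i/dt = ∑_{h,k} η h k · B i h k · f_h f_k − f_i ∑_k η i k f_k + ∑_h Γ i h(t) f_h (1 − f_h); moreover f is bounded on [0, t₀] and each component f_i(t) is strictly positive for all t ∈ [0, t₀]. -/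
open Set Metric Filter Topology

private lemma kinetic_prod_diff_bound {a b c d M dd : ℝ} (ha : |a| ≤ M) (hd : |d| ≤ M)
    (h1 : |b - d| ≤ dd) (h2 : |a - c| ≤ dd) (hM : 0 ≤ M) (hdd : 0 ≤ dd) :
    |a * b - c * d| ≤ 2 * M * dd := by
  have e : a * b - c * d = a * (b - d) + (a - c) * d := by ring
  calc |a * b - c * d| = |a * (b - d) + (a - c) * d| := by rw [e]
    _ ≤ |a| * |b - d| + |a - c| * |d| := by
        refine (abs_add_le _ _).trans ?_
        rw [abs_mul, abs_mul]
    _ ≤ M * dd + dd * M :=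
        add_le_add (mul_le_mul ha h1 (abs_nonneg _) hM) (mul_le_mul h2 hd (abs_nonneg _) hdd)
    _ = 2 * M * dd := by ring

/-- Picard–Lindelöf with the additional information that the solution stays in the
closed ball around the initial value. -/
private lemma kinetic_exists_solution_mem_ball {E : Type*} [NormedAddCommGroup E]
    [NormedSpace ℝ E] [CompleteSpace E] {v : ℝ → E → E} {tMin tMax : ℝ} {t₀ : Icc tMin tMax}
    (x₀ : E) {a L K : NNReal}
    (hpl : IsPicardLindelof v t₀ x₀ a 0 L K) :
    ∃ f : ℝ → E, f t₀ = x₀ ∧ ∀ t ∈ Icc tMin tMax,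
      f t ∈ closedBall x₀ a ∧ HasDerivWithinAt f (v t (f t)) (Icc tMin tMax) t := by
  obtain ⟨α, hα⟩ := ODE.FunSpace.exists_isFixedPt_next hpl (mem_closedBall_self le_rfl)
  refine ⟨α.compProj, by rw [ODE.FunSpace.compProj_val, ← hα, ODE.FunSpace.next_apply₀],
    fun t ht => ⟨α.compProj_mem_closedBall hpl.mul_max_le, ?_⟩⟩
  apply ODE.hasDerivWithinAt_picard_Icc t₀.2 hpl.continuousOn_uncurry
    α.continuous_compProj.continuousOn (fun _ ht' ↦ α.compProj_mem_closedBall hpl.mul_max_le)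
    x₀ ht |>.congr_of_mem _ ht
  intro t' ht'
  nth_rw 1 [← hα]
  rw [ODE.FunSpace.compProj_of_mem ht', ODE.FunSpace.next_apply]

/-- **Theorem 2.1.** For bounded nonnegative interaction rates, transition
probabilities summing to one, continuous force-field coefficients, and strictly positive
initial data, the nonconservative kinetic system admits a unique solution on some
interval `[0, t₀]`, which is bounded and has strictly positive components there. -/
theorem local_existence_uniqueness_positive_bounded
    (n : ℕ) (η : Fin n → Fin n → ℝ) (ηbar : ℝ) (hηbar : 0 < ηbar)
    (hη : ∀ h k : Fin n, 0 ≤ η h k ∧ η h k ≤ ηbar)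
    (B : Fin n → Fin n → Fin n → ℝ)
    (hB : ∀ h k : Fin n, ∑ i, B i h k = 1)
    (Γ : Fin n → Fin n → ℝ → ℝ)
    (hΓ : ∀ i h : Fin n, Continuous (Γ i h))
    (f0 : Fin n → ℝ) (hf0 : ∀ i, 0 < f0 i) :
    ∃ t₀ > (0 : ℝ), ∃ f : ℝ → Fin n → ℝ,
      f 0 = f0 ∧
      (∀ t ∈ Set.Icc (0 : ℝ) t₀, ∀ i : Fin n,
        HasDerivWithinAt (fun s => f s i)
          ((∑ h, ∑ k, η h k * B i h k * f t h * f t k)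
            - f t i * ∑ k, η i k * f t k
            + ∑ h, Γ i h t * f t h * (1 - f t h)) (Set.Icc 0 t₀) t) ∧
      (∃ M : ℝ, ∀ t ∈ Set.Icc (0 : ℝ) t₀, ‖f t‖ ≤ M) ∧
      (∀ t ∈ Set.Icc (0 : ℝ) t₀, ∀ i : Fin n, 0 < f t i) ∧
      (∀ g : ℝ → Fin n → ℝ, g 0 = f0 →
        (∀ t ∈ Set.Icc (0 : ℝ) t₀, ∀ i : Fin n,
          HasDerivWithinAt (fun s => g s i)
            ((∑ h, ∑ k, η h k * B i h k * g t h * g t k)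
              - g t i * ∑ k, η i k * g t k
              + ∑ h, Γ i h t * g t h * (1 - g t h)) (Set.Icc 0 t₀) t) →
        Set.EqOn f g (Set.Icc 0 t₀)) := by
  classical
  rcases Nat.eq_zero_or_pos n with hn | hn
  · -- trivial case `n = 0`
    subst hn
    refine ⟨1, one_pos, fun _ => f0, rfl, ?_, ⟨‖f0‖, fun t _ => le_rfl⟩, ?_, ?_⟩
    · intro t _ i; exact i.elim0
    · intro t _ i; exact i.elim0
    · intro g _ _ t _; exact Subsingleton.elim _ _
  haveI : Nonempty (Fin n) := ⟨⟨0, hn⟩⟩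
  -- the vector field
  set V : ℝ → (Fin n → ℝ) → Fin n → ℝ := fun t x i =>
    (∑ h, ∑ k, η h k * B i h k * x h * x k) - x i * ∑ k, η i k * x k
      + ∑ h, Γ i h t * x h * (1 - x h) with hV
  have ηb0 : (0 : ℝ) ≤ ηbar := hηbar.le
  -- bound on B
  obtain ⟨Bm, hBm⟩ := Finite.exists_le (fun p : Fin n × Fin n × Fin n => |B p.1 p.2.1 p.2.2|)
  set Bmax : ℝ := max Bm 0 with hBmaxdef
  have B0 : (0 : ℝ) ≤ Bmax := le_max_right _ _
  have hBb : ∀ i h k, |B i h k| ≤ Bmax := fun i h k =>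
    (hBm (i, h, k)).trans (le_max_left _ _)
  -- bound on Γ over `[0,1]`
  have hgb : ∀ p : Fin n × Fin n, ∃ C, ∀ t ∈ Icc (0 : ℝ) 1, |Γ p.1 p.2 t| ≤ C := by
    intro p
    obtain ⟨C, hC⟩ := isCompact_Icc.exists_bound_of_continuousOn (hΓ p.1 p.2).continuousOn
    exact ⟨C, fun t ht => by simpa [Real.norm_eq_abs] using hC t ht⟩
  choose Γc hΓc using hgb
  obtain ⟨Γm, hΓm⟩ := Finite.exists_le Γc
  set Γmax : ℝ := max Γm 0 with hΓmaxdef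
  have Γ0 : (0 : ℝ) ≤ Γmax := le_max_right _ _
  have hΓb : ∀ i h, ∀ t ∈ Icc (0 : ℝ) 1, |Γ i h t| ≤ Γmax := fun i h t ht =>
    (hΓc (i, h) t ht).trans ((hΓm (i, h)).trans (le_max_left _ _))
  have n0 : (0 : ℝ) ≤ (n : ℝ) := Nat.cast_nonneg n
  -- the Lipschitz-type constant
  set Kf : ℝ → ℝ := fun Mb =>
    (n : ℝ) * (n : ℝ) * (ηbar * Bmax * (2 * Mb)) + 2 * ((n : ℝ) * (ηbar * Mb))
      + (n : ℝ) * (Γmax * (1 + 2 * Mb)) with hKf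
  have hK0 : ∀ Mb : ℝ, 0 ≤ Mb → 0 ≤ Kf Mb := by
    intro Mb hMb
    have h1 : (0 : ℝ) ≤ (n : ℝ) * (n : ℝ) * (ηbar * Bmax * (2 * Mb)) :=
      mul_nonneg (mul_nonneg n0 n0) (mul_nonneg (mul_nonneg ηb0 B0) (by linarith))
    have h2 : (0 : ℝ) ≤ 2 * ((n : ℝ) * (ηbar * Mb)) :=
      mul_nonneg (by norm_num) (mul_nonneg n0 (mul_nonneg ηb0 hMb))
    have h3 : (0 : ℝ) ≤ (n : ℝ) * (Γmax * (1 + 2 * Mb)) :=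
      mul_nonneg n0 (mul_nonneg Γ0 (by linarith))
    simp only [hKf]
    linarith
  -- the key componentwise estimate
  have key : ∀ Mb : ℝ, 0 ≤ Mb → ∀ t ∈ Icc (0 : ℝ) 1, ∀ x y : Fin n → ℝ,
      ‖x‖ ≤ Mb → ‖y‖ ≤ Mb → ∀ i, |V t x i - V t y i| ≤ Kf Mb * ‖x - y‖ := by
    intro Mb hMb t ht x y hx hy i
    set d := ‖x - y‖ with hdd
    have hd0 : 0 ≤ d := norm_nonneg _
    have hxc : ∀ h, |x h| ≤ Mb := fun h => by
      simpa [Real.norm_eq_abs] using (norm_le_pi_norm x h).trans hx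
    have hyc : ∀ h, |y h| ≤ Mb := fun h => by
      simpa [Real.norm_eq_abs] using (norm_le_pi_norm y h).trans hy
    have hdc : ∀ h, |x h - y h| ≤ d := fun h => by
      simpa [Real.norm_eq_abs] using norm_le_pi_norm (x - y) h
    -- first term
    have hT1 : |(∑ h, ∑ k, η h k * B i h k * x h * x k)
        - ∑ h, ∑ k, η h k * B i h k * y h * y k|
        ≤ (n : ℝ) * (n : ℝ) * (ηbar * Bmax * (2 * Mb * d)) := by
      rw [← Fintype.sum_prod_type' (f := fun h k => η h k * B i h k * x h * x k),
        ← Fintype.sum_prod_type' (f := fun h k => η h k * B i h k * y h * y k),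
        ← Finset.sum_sub_distrib]
      refine (Finset.abs_sum_le_sum_abs _ _).trans ?_
      have hbound : ∀ p : Fin n × Fin n,
          |η p.1 p.2 * B i p.1 p.2 * x p.1 * x p.2 - η p.1 p.2 * B i p.1 p.2 * y p.1 * y p.2|
            ≤ ηbar * Bmax * (2 * Mb * d) := by
        intro p
        have e : η p.1 p.2 * B i p.1 p.2 * x p.1 * x p.2
            - η p.1 p.2 * B i p.1 p.2 * y p.1 * y p.2
            = (η p.1 p.2 * B i p.1 p.2) * (x p.1 * x p.2 - y p.1 * y p.2) := by ring
        rw [e, abs_mul]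
        have h1 : |η p.1 p.2 * B i p.1 p.2| ≤ ηbar * Bmax := by
          rw [abs_mul]
          exact mul_le_mul (by rw [abs_of_nonneg (hη _ _).1]; exact (hη _ _).2)
            (hBb i p.1 p.2) (abs_nonneg _) ηb0
        have h2 : |x p.1 * x p.2 - y p.1 * y p.2| ≤ 2 * Mb * d :=
          kinetic_prod_diff_bound (hxc p.1) (hyc p.2) (hdc p.2) (hdc p.1) hMb hd0
        exact mul_le_mul h1 h2 (abs_nonneg _) (mul_nonneg ηb0 B0)
      refine (Finset.sum_le_sum fun p _ => hbound p).trans (le_of_eq ?_)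
      rw [Finset.sum_const, Finset.card_univ]
      simp only [Fintype.card_prod, Fintype.card_fin, nsmul_eq_mul, Nat.cast_mul]
    -- second term
    have hSd : |(∑ k, η i k * x k) - ∑ k, η i k * y k| ≤ (n : ℝ) * (ηbar * d) := by
      rw [← Finset.sum_sub_distrib]
      refine (Finset.abs_sum_le_sum_abs _ _).trans ?_
      have hbound : ∀ k : Fin n, |η i k * x k - η i k * y k| ≤ ηbar * d := by
        intro k
        rw [← mul_sub, abs_mul]
        exact mul_le_mul (by rw [abs_of_nonneg (hη _ _).1]; exact (hη _ _).2)
          (hdc k) (abs_nonneg _) ηb0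
      refine (Finset.sum_le_sum fun k _ => hbound k).trans (le_of_eq ?_)
      rw [Finset.sum_const, Finset.card_univ]
      simp [Fintype.card_fin, nsmul_eq_mul]
    have hSy : |∑ k, η i k * y k| ≤ (n : ℝ) * (ηbar * Mb) := by
      refine (Finset.abs_sum_le_sum_abs _ _).trans ?_
      have hbound : ∀ k : Fin n, |η i k * y k| ≤ ηbar * Mb := by
        intro k
        rw [abs_mul]
        exact mul_le_mul (by rw [abs_of_nonneg (hη _ _).1]; exact (hη _ _).2)
          (hyc k) (abs_nonneg _) ηb0
      refine (Finset.sum_le_sum fun k _ => hbound k).trans (le_of_eq ?_)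
      rw [Finset.sum_const, Finset.card_univ]
      simp [Fintype.card_fin, nsmul_eq_mul]
    have hT2 : |x i * (∑ k, η i k * x k) - y i * (∑ k, η i k * y k)|
        ≤ Mb * ((n : ℝ) * (ηbar * d)) + d * ((n : ℝ) * (ηbar * Mb)) := by
      have e : x i * (∑ k, η i k * x k) - y i * (∑ k, η i k * y k)
          = x i * ((∑ k, η i k * x k) - ∑ k, η i k * y k)
            + (x i - y i) * ∑ k, η i k * y k := by ring
      rw [e]
      refine (abs_add_le _ _).trans ?_
      rw [abs_mul, abs_mul]
      exact add_le_add
        (mul_le_mul (hxc i) hSd (abs_nonneg _) hMb)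
        (mul_le_mul (hdc i) hSy (abs_nonneg _) hd0)
    -- third term
    have hT3 : |(∑ h, Γ i h t * x h * (1 - x h)) - ∑ h, Γ i h t * y h * (1 - y h)|
        ≤ (n : ℝ) * (Γmax * (d * (1 + 2 * Mb))) := by
      rw [← Finset.sum_sub_distrib]
      refine (Finset.abs_sum_le_sum_abs _ _).trans ?_
      have hbound : ∀ h : Fin n, |Γ i h t * x h * (1 - x h) - Γ i h t * y h * (1 - y h)|
          ≤ Γmax * (d * (1 + 2 * Mb)) := by
        intro h
        have e : Γ i h t * x h * (1 - x h) - Γ i h t * y h * (1 - y h)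
            = Γ i h t * ((x h - y h) * (1 - (x h + y h))) := by ring
        rw [e, abs_mul, abs_mul]
        refine mul_le_mul (hΓb i h t ht) ?_ (mul_nonneg (abs_nonneg _) (abs_nonneg _)) Γ0
        have h1 : |1 - (x h + y h)| ≤ 1 + 2 * Mb := by
          have := (abs_add_le (x h) (y h)).trans (add_le_add (hxc h) (hyc h))
          calc |1 - (x h + y h)| ≤ |(1 : ℝ)| + |x h + y h| := abs_sub _ _
            _ ≤ 1 + 2 * Mb := by rw [abs_one]; linarith
        exact mul_le_mul (hdc h) h1 (abs_nonneg _) hd0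
      refine (Finset.sum_le_sum fun h _ => hbound h).trans (le_of_eq ?_)
      rw [Finset.sum_const, Finset.card_univ]
      simp [Fintype.card_fin, nsmul_eq_mul]
    -- assembly
    have e : V t x i - V t y i =
        ((∑ h, ∑ k, η h k * B i h k * x h * x k) - ∑ h, ∑ k, η h k * B i h k * y h * y k)
        - (x i * (∑ k, η i k * x k) - y i * (∑ k, η i k * y k))
        + ((∑ h, Γ i h t * x h * (1 - x h)) - ∑ h, Γ i h t * y h * (1 - y h)) := by
      simp only [hV]; ring
    rw [e]
    have habs : ∀ a b c : ℝ, |a - b + c| ≤ |a| + |b| + |c| := by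
      intro a b c
      calc |a - b + c| ≤ |a - b| + |c| := abs_add_le _ _
        _ ≤ |a| + |b| + |c| := by have := abs_sub a b; linarith
    refine ((habs _ _ _).trans (add_le_add (add_le_add hT1 hT2) hT3)).trans (le_of_eq ?_)
    simp only [hKf, hdd]
    ring
  -- Lipschitz on closed balls
  have lipOn : ∀ (c : Fin n → ℝ) (ρ : ℝ), 0 ≤ ρ → ∀ t ∈ Icc (0 : ℝ) 1,
      LipschitzOnWith (Real.toNNReal (Kf (‖c‖ + ρ))) (V t) (closedBall c ρ) := by
    intro c ρ hρ t ht
    have hMc : (0 : ℝ) ≤ ‖c‖ + ρ := add_nonneg (norm_nonneg _) hρ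
    apply LipschitzOnWith.of_dist_le_mul
    intro x hx y hy
    have hxn : ‖x‖ ≤ ‖c‖ + ρ := by
      have h1 : ‖x - c‖ ≤ ρ := mem_closedBall_iff_norm.mp hx
      have h2 := norm_sub_norm_le x c
      linarith
    have hyn : ‖y‖ ≤ ‖c‖ + ρ := by
      have h1 : ‖y - c‖ ≤ ρ := mem_closedBall_iff_norm.mp hy
      have h2 := norm_sub_norm_le y c
      linarith
    rw [dist_eq_norm, dist_eq_norm, Real.coe_toNNReal _ (hK0 _ hMc)]
    refine (pi_norm_le_iff_of_nonneg
      (mul_nonneg (hK0 _ hMc) (norm_nonneg _))).mpr fun i => ?_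
    simpa [Real.norm_eq_abs] using key (‖c‖ + ρ) hMc t ht x y hxn hyn i
  -- continuity in time
  have contV : ∀ x : Fin n → ℝ, Continuous fun t => V t x := by
    intro x
    apply continuous_pi
    intro i
    simp only [hV]
    exact continuous_const.add
      (continuous_finset_sum _ fun h _ => ((hΓ i h).mul continuous_const).mul continuous_const)
  -- radius and ball
  set m : ℝ := Finset.univ.inf' Finset.univ_nonempty f0 with hmdef
  have hm : 0 < m := (Finset.lt_inf'_iff _).mpr fun i _ => hf0 i
  have hmle : ∀ i, m ≤ f0 i := fun i => Finset.inf'_le _ (Finset.mem_univ i)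
  set R : ℝ := m / 2 with hRdef
  have hR : 0 < R := by simp only [hRdef]; linarith
  set M : ℝ := ‖f0‖ + R with hMdef
  have hM0 : 0 ≤ M := add_nonneg (norm_nonneg _) hR.le
  set K : ℝ := Kf M with hKdef
  have hKpos : 0 ≤ K := hK0 M hM0
  -- bound on V at the center
  obtain ⟨C0, hC0⟩ := (isCompact_Icc (a := (0:ℝ)) (b := 1)).exists_bound_of_continuousOn
    (contV f0).continuousOn
  set C : ℝ := K * R + max C0 0 with hCdef
  have hCpos : 0 ≤ C := add_nonneg (mul_nonneg hKpos hR.le) (le_max_right _ _)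
  set tM : ℝ := min 1 (R / (C + 1)) with htMdef
  have htM0 : 0 < tM := lt_min one_pos (div_pos hR (by linarith))
  have htM1 : tM ≤ 1 := min_le_left _ _
  have hsub01 : Icc (0 : ℝ) tM ⊆ Icc (0 : ℝ) 1 := Icc_subset_Icc le_rfl htM1
  -- the Picard–Lindelöf structure
  have hpl : IsPicardLindelof V (tmin := 0) (tmax := tM) ⟨0, le_rfl, htM0.le⟩ f0 ⟨R, hR.le⟩ 0
      ⟨C, hCpos⟩ (Real.toNNReal K) := by
    refine ⟨?_, ?_, ?_, ?_⟩
    · intro t ht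
      show LipschitzOnWith (Real.toNNReal K) (V t) (closedBall f0 R)
      have := lipOn f0 R hR.le t (hsub01 ht)
      simpa only [hMdef] using this
    · intro x _
      exact (contV x).continuousOn
    · intro t ht x hx
      show ‖V t x‖ ≤ C
      have h1 : ‖V t x - V t f0‖ ≤ K * R := by
        have hlip := (lipOn f0 R hR.le t (hsub01 ht)).dist_le_mul x hx f0
          (mem_closedBall_self hR.le)
        rw [dist_eq_norm, dist_eq_norm, Real.coe_toNNReal _ (hK0 _ hM0)] at hlip
        refine hlip.trans ?_
        have h2 : ‖x - f0‖ ≤ R := mem_closedBall_iff_norm.mp hx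
        have h3 : 0 ≤ Kf (‖f0‖ + R) := hK0 _ hM0
        calc Kf (‖f0‖ + R) * ‖x - f0‖ ≤ Kf (‖f0‖ + R) * R :=
              mul_le_mul_of_nonneg_left h2 h3
          _ = K * R := by rw [hKdef, hMdef]
      have h2 : ‖V t f0‖ ≤ max C0 0 := (hC0 t (hsub01 ht)).trans (le_max_left _ _)
      have h3 := norm_sub_norm_le (V t x) (V t f0)
      simp only [hCdef]
      linarith
    · show C * max (tM - 0) (0 - 0) ≤ R - 0
      rw [sub_zero R]
      have h1 : max (tM - 0) (0 - 0) = tM := by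
        rw [max_eq_left]
        · ring
        · linarith
      rw [h1]
      have h2 : tM ≤ R / (C + 1) := min_le_right _ _
      have h3 : C * tM ≤ C * (R / (C + 1)) := mul_le_mul_of_nonneg_left h2 hCpos
      refine h3.trans ?_
      rw [mul_div_assoc', div_le_iff₀ (by linarith : (0:ℝ) < C + 1)]
      nlinarith
  obtain ⟨f, hfinit, hfsol⟩ := kinetic_exists_solution_mem_ball f0 hpl
  replace hfinit : f 0 = f0 := hfinit
  -- continuity of the solution
  have Cf : ContinuousOn f (Icc 0 tM) := fun s hs => ((hfsol s hs).2).continuousWithinAt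
  refine ⟨tM, htM0, f, hfinit, ?_, ⟨‖f0‖ + R, ?_⟩, ?_, ?_⟩
  · -- componentwise derivative
    intro t ht i
    have h := (hfsol t ht).2
    have hi := hasDerivWithinAt_pi.mp h i
    simpa only [hV] using hi
  · -- boundedness
    intro t ht
    have h1 : ‖f t - f0‖ ≤ R := mem_closedBall_iff_norm.mp (hfsol t ht).1
    have h2 := norm_sub_norm_le (f t) f0
    linarith
  · -- positivity
    intro t ht i
    have h1 : |f t i - f0 i| ≤ R := by
      have h2 : ‖f t - f0‖ ≤ R := mem_closedBall_iff_norm.mp (hfsol t ht).1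
      have h3 := norm_le_pi_norm (f t - f0) i
      simp only [Pi.sub_apply, Real.norm_eq_abs] at h3
      linarith
    have h4 := abs_le.mp h1
    have h5 := hmle i
    simp only [hRdef] at h4 ⊢
    linarith [h4.1]
  · -- uniqueness
    intro g hg0 hgd
    have hgV : ∀ t ∈ Icc (0 : ℝ) tM, HasDerivWithinAt g (V t (g t)) (Icc 0 tM) t := by
      intro t ht
      apply hasDerivWithinAt_pi.mpr
      intro i
      simp only [hV]
      exact hgd t ht i
    have Cg : ContinuousOn g (Icc 0 tM) := fun s hs => (hgV s hs).continuousWithinAt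
    -- sup of the coincidence set
    set A : Set ℝ := {t | t ∈ Icc (0 : ℝ) tM ∧ ∀ s ∈ Icc (0 : ℝ) t, f s = g s} with hAdef
    have hA0 : (0 : ℝ) ∈ A := by
      refine ⟨⟨le_rfl, htM0.le⟩, fun s hs => ?_⟩
      have : s = 0 := le_antisymm hs.2 hs.1
      rw [this, hfinit, hg0]
    have hAbdd : BddAbove A := ⟨tM, fun x hx => hx.1.2⟩
    have hAne : A.Nonempty := ⟨0, hA0⟩
    set T : ℝ := sSup A with hTdef
    have hT0 : 0 ≤ T := le_csSup hAbdd hA0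
    have hTle : T ≤ tM := csSup_le hAne fun x hx => hx.1.2
    have hlt : ∀ s, 0 ≤ s → s < T → f s = g s := by
      intro s hs0 hsT
      obtain ⟨t, htA, hst⟩ := exists_lt_of_lt_csSup hAne hsT
      exact htA.2 s ⟨hs0, hst.le⟩
    have hTeq : f T = g T := by
      rcases eq_or_lt_of_le hT0 with h | h
      · rw [← h, hfinit, hg0]
      · haveI : (𝓝[Ioo (0 : ℝ) T] T).NeBot := right_nhdsWithin_Ioo_neBot h
        have hsub : Ioo (0 : ℝ) T ⊆ Icc 0 tM := fun z hz => ⟨hz.1.le, hz.2.le.trans hTle⟩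
        have h1 : Filter.Tendsto f (𝓝[Ioo (0 : ℝ) T] T) (𝓝 (f T)) :=
          (Cf T ⟨hT0, hTle⟩).tendsto.mono_left (nhdsWithin_mono T hsub)
        have h2 : Filter.Tendsto g (𝓝[Ioo (0 : ℝ) T] T) (𝓝 (g T)) :=
          (Cg T ⟨hT0, hTle⟩).tendsto.mono_left (nhdsWithin_mono T hsub)
        have heq : f =ᶠ[𝓝[Ioo (0 : ℝ) T] T] g := by
          filter_upwards [self_mem_nhdsWithin] with s hs
          exact hlt s hs.1.le hs.2
        exact tendsto_nhds_unique_of_eventuallyEq h1 h2 heq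
    have hTfull : T = tM := by
      by_contra hne
      have hTlt : T < tM := lt_of_le_of_ne hTle hne
      -- local data around T
      set c : Fin n → ℝ := f T with hcdef
      set K₂ : NNReal := Real.toNNReal (Kf (‖c‖ + 1)) with hK₂def
      set S : ℝ → Set (Fin n → ℝ) := fun u =>
        if u ∈ Icc (0 : ℝ) 1 then closedBall c 1 else ∅ with hSdef
      have hvS : ∀ u, LipschitzOnWith K₂ (V u) (S u) := by
        intro u
        by_cases h : u ∈ Icc (0 : ℝ) 1
        · simpa only [hSdef, if_pos h] using lipOn c 1 zero_le_one u h
        · simp only [hSdef, if_neg h]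
          exact lipschitzOnWith_empty _ _
      -- continuity gives a small interval staying in the ball
      obtain ⟨δf, hδf0, hδf⟩ := Metric.continuousWithinAt_iff.mp (Cf T ⟨hT0, hTle⟩) 1 one_pos
      obtain ⟨δg, hδg0, hδg⟩ := Metric.continuousWithinAt_iff.mp (Cg T ⟨hT0, hTle⟩) 1 one_pos
      set δ : ℝ := min δf δg with hδdef
      have hδ0 : 0 < δ := lt_min hδf0 hδg0
      set b : ℝ := min (T + δ / 2) tM with hbdef
      have hTb : T < b := lt_min (by linarith) hTlt
      have hbtM : b ≤ tM := min_le_right _ _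
      have hmemIcc : ∀ s ∈ Icc T b, s ∈ Icc (0 : ℝ) tM := fun s hs =>
        ⟨hT0.trans hs.1, hs.2.trans hbtM⟩
      have hdistT : ∀ s ∈ Icc T b, dist s T < δ := by
        intro s hs
        rw [Real.dist_eq, abs_of_nonneg (by linarith [hs.1])]
        have : s ≤ T + δ / 2 := hs.2.trans (min_le_left _ _)
        linarith
      have hfmem : ∀ s ∈ Icc T b, f s ∈ closedBall c 1 := by
        intro s hs
        exact mem_closedBall.mpr (hδf (hmemIcc s hs) ((hdistT s hs).trans_le (min_le_left _ _))).le
      have hgmem : ∀ s ∈ Icc T b, g s ∈ closedBall c 1 := by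
        intro s hs
        have := (hδg (hmemIcc s hs) ((hdistT s hs).trans_le (min_le_right _ _))).le
        rw [← hTeq] at this
        exact mem_closedBall.mpr this
      have hmemS : ∀ s ∈ Icc T b, S s = closedBall c 1 := by
        intro s hs
        have : s ∈ Icc (0 : ℝ) 1 := ⟨hT0.trans hs.1, (hs.2.trans hbtM).trans htM1⟩
        simp only [hSdef, if_pos this]
      -- derivatives in the right-hand sense
      have derivIci : ∀ (F : ℝ → Fin n → ℝ),
          (∀ u ∈ Icc (0 : ℝ) tM, HasDerivWithinAt F (V u (F u)) (Icc 0 tM) u) →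
          ∀ u ∈ Ico T b, HasDerivWithinAt F (V u (F u)) (Ici u) u := by
        intro F hF u hu
        have hu0 : 0 ≤ u := hT0.trans hu.1
        have hut : u < tM := hu.2.trans_le hbtM
        refine (hF u ⟨hu0, hut.le⟩).mono_of_mem_nhdsWithin ?_
        have h1 : Iic tM ∈ 𝓝[Ici u] u :=
          mem_nhdsWithin_of_mem_nhds (Iic_mem_nhds hut)
        have h2 : Ici u ∩ Iic tM ∈ 𝓝[Ici u] u := Filter.inter_mem self_mem_nhdsWithin h1
        exact Filter.mem_of_superset h2 fun z hz => ⟨hu0.trans hz.1, hz.2⟩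
      have huniq : Set.EqOn f g (Icc T b) := by
        refine ODE_solution_unique_of_mem_Icc_right (fun u _ => hvS u)
          (Cf.mono fun s hs => hmemIcc s hs) ?_ ?_
          (Cg.mono fun s hs => hmemIcc s hs) ?_ ?_ hTeq
        · exact fun u hu => derivIci f (fun u hu => (hfsol u hu).2) u hu
        · intro u hu
          rw [hmemS u (Ico_subset_Icc_self hu)]
          exact hfmem u (Ico_subset_Icc_self hu)
        · exact fun u hu => derivIci g hgV u hu
        · intro u hu
          rw [hmemS u (Ico_subset_Icc_self hu)]
          exact hgmem u (Ico_subset_Icc_self hu)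
      have hbA : b ∈ A := by
        refine ⟨⟨hT0.trans hTb.le, hbtM⟩, fun s hs => ?_⟩
        rcases lt_or_ge s T with h | h
        · exact hlt s hs.1 h
        · exact huniq ⟨h, hs.2⟩
      have : b ≤ T := le_csSup hAbdd hbA
      linarith
    intro s hs
    rcases eq_or_lt_of_le hs.2 with h | h
    · rw [h, ← hTfull]
      exact hTeq
    · exact hlt s hs.1 (hTfull ▸ h)
end

section
/- (First scenario) Let γ ≠ 0 and set Γ12 = −γ, Γ21 = −γ, Γ11 = −3γ, Γ22 = 3γ, α = −6γ. Then the coexistence equilibrium of the system df₁/dt = −α f₁ f₂ + Γ11 f₁(1−f₁) + Γ12 f₂(1−f₂), df₂/dt = α f₁ f₂ + Γ21 f₁(1−f₁) + Γ22 f₂(1−f₂) is E₁ = (5/47, 35/47), and the Jacobian matrix J of the vector field at E₁, namely J = [[−α f₂* + (1−2f₁*)Γ11, −α f₁* + (1−2f₂*)Γ12],[α f₂* + (1−2f₁*)Γ21, α f₁* + (1−2f₂*)Γ22]], has trace 0 and strictly positive determinant; consequently its eigenvalues are purely imaginary and nonzero (E₁ is a linear center). -/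
theorem Complex.re_eq_zero_and_ne_zero_of_sq_eq_neg {d : ℝ} (hd : 0 < d) {μ : ℂ}
    (h : μ ^ 2 = -(d : ℂ)) : μ.re = 0 ∧ μ ≠ 0 := by
  have hsqrt : (((√d : ℝ) : ℂ) * I) ^ 2 = -(d : ℂ) := by
    rw [mul_pow, I_sq, ← ofReal_pow, Real.sq_sqrt hd.le]; ring
  have hne : ((√d : ℝ) : ℂ) * I ≠ 0 :=
    mul_ne_zero (ofReal_ne_zero.2 (Real.sqrt_pos.2 hd).ne') I_ne_zero
  rcases sq_eq_sq_iff_eq_or_eq_neg.1 (h.trans hsqrt.symm) with rfl | rfl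
  · exact ⟨by simp, hne⟩
  · exact ⟨by simp, neg_ne_zero.2 hne⟩

theorem Complex.re_eq_zero_and_ne_zero_of_root_of_trace_zero {t d : ℝ}
    (ht : t = 0) (hd : 0 < d) {μ : ℂ} (hμ : μ ^ 2 - (t : ℂ) * μ + (d : ℂ) = 0) :
    μ.re = 0 ∧ μ ≠ 0 :=
  re_eq_zero_and_ne_zero_of_sq_eq_neg hd <| by
    rw [ht, ofReal_zero] at hμ; linear_combination hμ

/-- **First scenario.** With `Γ₁² = −γ`, `Γ₂¹ = −γ`, `Γ₁¹ = −3γ`,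
`Γ₂² = 3γ`, `α = −6γ` (`γ ≠ 0`), the coexistence equilibrium is `E₁ = (5/47, 35/47)`,
and the Jacobian matrix at `E₁` has zero trace and strictly positive determinant, so its
eigenvalues (the roots of the characteristic polynomial `μ² − (tr J) μ + det J`) are
purely imaginary and nonzero: `E₁` is a linear center. -/
theorem first_scenario_center (γ : ℝ) (hγ : γ ≠ 0) :
    let Γ12 : ℝ := -γ
    let Γ21 : ℝ := -γ
    let Γ11 : ℝ := -3 * γ
    let Γ22 : ℝ := 3 * γ
    let α : ℝ := -6 * γ
    let f₁ : ℝ := 5 / 47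
    let f₂ : ℝ := 35 / 47
    let J : Matrix (Fin 2) (Fin 2) ℝ :=
      !![-α * f₂ + (1 - 2 * f₁) * Γ11, -α * f₁ + (1 - 2 * f₂) * Γ12;
          α * f₂ + (1 - 2 * f₁) * Γ21,  α * f₁ + (1 - 2 * f₂) * Γ22]
    (-α * f₁ * f₂ + Γ11 * f₁ * (1 - f₁) + Γ12 * f₂ * (1 - f₂) = 0 ∧
      α * f₁ * f₂ + Γ21 * f₁ * (1 - f₁) + Γ22 * f₂ * (1 - f₂) = 0) ∧
    Matrix.trace J = 0 ∧ 0 < J.det ∧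
    ∀ μ : ℂ, μ ^ 2 - (Matrix.trace J : ℝ) * μ + (J.det : ℝ) = 0 →
      μ.re = 0 ∧ μ ≠ 0 := by
  intro Γ12 Γ21 Γ11 Γ22 α f₁ f₂ J
  have equilibrium :
      (-α * f₁ * f₂ + Γ11 * f₁ * (1 - f₁) + Γ12 * f₂ * (1 - f₂) = 0 ∧
        α * f₁ * f₂ + Γ21 * f₁ * (1 - f₁) + Γ22 * f₂ * (1 - f₂) = 0) := by
    constructor <;> ring
  have trace_J : J.trace = 0 := by
    simp only [J, Matrix.trace_fin_two_of]; ring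
  have det_J : J.det = 3290 / 2209 * γ ^ 2 := by
    simp only [J, Matrix.det_fin_two_of]; ring
  have det_J_pos : 0 < J.det := by
    rw [det_J]; positivity
  exact ⟨equilibrium, trace_J, det_J_pos, fun μ hμ =>
    Complex.re_eq_zero_and_ne_zero_of_root_of_trace_zero trace_J det_J_pos hμ⟩
end

section
/- (Second scenario) Let γ ∈ ℝ, γ ≠ 0, and set Γ12 = −γ, Γ21 = −γ, Γ11 = −(14/5)γ, Γ22 = (29/10)γ, α = −6γ. Then the coexistence equilibrium of the system df₁/dt = −α f₁ f₂ + Γ11 f₁(1−f₁) + Γ12 f₂(1−f₂), df₂/dt = α f₁ f₂ + Γ21 f₁(1−f₁) + Γ22 f₂(1−f₂) is E₁ = (2/17, 12/17); the Jacobian J at E₁ has trace (33/170)γ, and (trace J)² − 4 det J < 0, so the eigenvalues of J form a non-real complex-conjugate pair whose common real part has the sign of γ. In particular, if γ < 0 both eigenvalues have negative real part (E₁ is a stable spiral sink), while if γ > 0 both have positive real part (E₁ is unstable). -/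
/-!
The Jacobian at `E₁` has determinant `(684/425)γ²`, so its discriminant is
`-(184959/28900)γ² < 0`. A root `μ = x + iy` of `μ² - tμ + d` satisfies `y (2x - t) = 0`
and cannot be real when `t² < 4d`, hence `x = t/2`, which has the sign of `γ`.
-/

namespace Complex

lemma im_ne_zero_of_sq_sub_mul_add_eq_zero {t d : ℝ} (hdisc : t ^ 2 - 4 * d < 0) {μ : ℂ}
    (hμ : μ ^ 2 - t * μ + d = 0) : μ.im ≠ 0 := by
  intro him
  have hre := congrArg Complex.re hμ
  simp only [sub_re, add_re, mul_re, pow_two, ofReal_re, ofReal_im, him, zero_re] at hre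
  nlinarith [sq_nonneg (2 * μ.re - t)]

lemma re_eq_half_of_sq_sub_mul_add_eq_zero {t d : ℝ} (hdisc : t ^ 2 - 4 * d < 0) {μ : ℂ}
    (hμ : μ ^ 2 - t * μ + d = 0) : μ.re = t / 2 := by
  have him := congrArg Complex.im hμ
  simp only [sub_im, add_im, mul_im, pow_two, ofReal_re, ofReal_im, zero_im] at him
  have hprod : μ.im * (2 * μ.re - t) = 0 := by linarith
  have hre := (mul_eq_zero.mp hprod).resolve_left
    (im_ne_zero_of_sq_sub_mul_add_eq_zero hdisc hμ)
  linarith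

end Complex

/-- **Second scenario.** With `Γ₁² = −γ`, `Γ₂¹ = −γ`, `Γ₁¹ = −(14/5)γ`,
`Γ₂² = (29/10)γ`, `α = −6γ` (`γ ≠ 0`), the coexistence equilibrium is
`E₁ = (2/17, 12/17)`; the Jacobian `J` at `E₁` has trace `(33/170)γ` and negative
discriminant `(tr J)² − 4 det J < 0`, so its eigenvalues are a non-real
complex-conjugate pair whose common real part has the sign of `γ`: for `γ < 0` both
eigenvalues have negative real part (stable spiral sink), for `γ > 0` positive real
part (unstable). -/
theorem second_scenario_spiral (γ : ℝ) (hγ : γ ≠ 0) :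
    let Γ12 : ℝ := -γ
    let Γ21 : ℝ := -γ
    let Γ11 : ℝ := -(14 / 5) * γ
    let Γ22 : ℝ := (29 / 10) * γ
    let α : ℝ := -6 * γ
    let f₁ : ℝ := 2 / 17
    let f₂ : ℝ := 12 / 17
    let J : Matrix (Fin 2) (Fin 2) ℝ :=
      !![-α * f₂ + (1 - 2 * f₁) * Γ11, -α * f₁ + (1 - 2 * f₂) * Γ12;
          α * f₂ + (1 - 2 * f₁) * Γ21,  α * f₁ + (1 - 2 * f₂) * Γ22]
    (-α * f₁ * f₂ + Γ11 * f₁ * (1 - f₁) + Γ12 * f₂ * (1 - f₂) = 0 ∧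
      α * f₁ * f₂ + Γ21 * f₁ * (1 - f₁) + Γ22 * f₂ * (1 - f₂) = 0) ∧
    Matrix.trace J = (33 / 170) * γ ∧
    (Matrix.trace J) ^ 2 - 4 * J.det < 0 ∧
    ∀ μ : ℂ, μ ^ 2 - (Matrix.trace J : ℝ) * μ + (J.det : ℝ) = 0 →
      μ.im ≠ 0 ∧ (μ.re < 0 ↔ γ < 0) ∧ (0 < μ.re ↔ 0 < γ) := by
  intro Γ12 Γ21 Γ11 Γ22 α f₁ f₂ J
  have htr : J.trace = (33 / 170) * γ := by
    simp only [J, Matrix.trace_fin_two_of, α, Γ11, Γ22, f₁, f₂]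
    ring
  have hdet : J.det = (684 / 425) * γ ^ 2 := by
    simp only [J, Matrix.det_fin_two_of, α, Γ11, Γ12, Γ21, Γ22, f₁, f₂]
    ring
  have hdisc : J.trace ^ 2 - 4 * J.det < 0 := by
    have : J.trace ^ 2 - 4 * J.det = -(184959 / 28900) * γ ^ 2 := by rw [htr, hdet]; ring
    rw [this]
    exact mul_neg_of_neg_of_pos (by norm_num) (sq_pos_of_ne_zero hγ)
  refine ⟨⟨by simp only [α, Γ11, Γ12, f₁, f₂]; ring, by simp only [α, Γ21, Γ22, f₁, f₂]; ring⟩,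
    htr, hdisc, fun μ hμ => ⟨Complex.im_ne_zero_of_sq_sub_mul_add_eq_zero hdisc hμ, ?_, ?_⟩⟩
  all_goals
    rw [Complex.re_eq_half_of_sq_sub_mul_add_eq_zero hdisc hμ, htr]
    constructor <;> intro h <;> linarith
end

section
/- (Third scenario) Let γ ∈ ℝ, γ ≠ 0, and set Γ12 = (6/5)γ, Γ21 = −γ, Γ11 = −(31/10)γ, Γ22 = (29/10)γ, α = −6γ. Then the coexistence equilibrium E₁ = (f₁*, f₂*) of the system df₁/dt = −α f₁ f₂ + Γ11 f₁(1−f₁) + Γ12 f₂(1−f₂), df₂/dt = α f₁ f₂ + Γ21 f₁(1−f₁) + Γ22 f₂(1−f₂) satisfies f₁* = f₂* (the two equilibrium densities coincide); moreover the Jacobian J at E₁ has trace equal to a strictly negative constant times γ and (trace J)² − 4 det J < 0, so the eigenvalues of J are a non-real complex-conjugate pair whose common real part has the sign of −γ. In particular, if γ > 0 both eigenvalues have negative real part (E₁ is linearly stable), while if γ < 0 both have positive real part (E₁ is unstable). -/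
/-!
The chosen coefficients satisfy `a + b + c + d = 0`, which forces `f₁* = f₂* =: f` (here
`f = 19/79`). On the diagonal `f₁ = f₂` the interaction term `α f` cancels from the trace of the
Jacobian, leaving `tr J = (1 - 2f)(Γ₁¹ + Γ₂²) = -(41/395) γ`, while `det J = (31939/7900) γ²`.
The discriminant is then a negative multiple of `γ²`, so the roots of the characteristic
polynomial are non-real conjugates with common real part `tr J / 2`.
-/

lemma coexistence_eq_of_add_eq_zero {a b c d g D : ℝ} (h : a + b + c + d = 0) :
    (a * b - c * d) * ((a * b - c * d) + g * (a + d)) / D =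
      (a * b - c * d) * ((a * b - c * d) - g * (b + c)) / D := by
  rw [show a + d = -(b + c) by linarith]
  ring

lemma trace_jacobian_of_eq (α Γ11 Γ12 Γ21 Γ22 f : ℝ) :
    Matrix.trace !![-α * f + (1 - 2 * f) * Γ11, -α * f + (1 - 2 * f) * Γ12;
        α * f + (1 - 2 * f) * Γ21, α * f + (1 - 2 * f) * Γ22] = (1 - 2 * f) * (Γ11 + Γ22) := by
  rw [Matrix.trace_fin_two_of]
  ring

lemma Complex.im_ne_zero_and_re_eq_of_quadratic_eq_zero {t δ : ℝ} (hdisc : t ^ 2 - 4 * δ < 0)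
    {μ : ℂ} (hμ : μ ^ 2 - t * μ + δ = 0) : μ.im ≠ 0 ∧ μ.re = t / 2 := by
  have hre := congrArg Complex.re hμ
  have him := congrArg Complex.im hμ
  simp only [sq, Complex.add_re, Complex.sub_re, Complex.mul_re, Complex.ofReal_re,
    Complex.ofReal_im, Complex.add_im, Complex.sub_im, Complex.mul_im, Complex.zero_re,
    Complex.zero_im] at hre him
  have him' : μ.im * (2 * μ.re - t) = 0 := by linarith
  have hne : μ.im ≠ 0 := by
    intro h0
    rw [h0] at hre
    nlinarith [sq_nonneg (2 * μ.re - t)]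
  exact ⟨hne, by linarith [(mul_eq_zero.mp him').resolve_left hne]⟩

/-- **Third scenario.** With `a = 6/5`, `b = −1`, `c = −31/10`,
`d = 29/10`, `g = −6` (so `Γ₁² = aγ`, `Γ₂¹ = bγ`, `Γ₁¹ = cγ`, `Γ₂² = dγ`, `α = gγ`,
`γ ≠ 0`), the coexistence equilibrium `E₁ = (f₁*, f₂*)` satisfies `f₁* = f₂*`; the
Jacobian `J` at `E₁` has trace equal to a strictly negative constant times `γ` and
negative discriminant `(tr J)² − 4 det J < 0`, so its eigenvalues are a non-real
complex-conjugate pair whose common real part has the sign of `−γ`: for `γ > 0` both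
have negative real part (linearly stable), for `γ < 0` positive real part (unstable). -/
theorem third_scenario (γ : ℝ) (hγ : γ ≠ 0) :
    let a : ℝ := 6 / 5
    let b : ℝ := -1
    let c : ℝ := -(31 / 10)
    let d : ℝ := 29 / 10
    let g : ℝ := -6
    let Γ12 : ℝ := a * γ
    let Γ21 : ℝ := b * γ
    let Γ11 : ℝ := c * γ
    let Γ22 : ℝ := d * γ
    let α : ℝ := g * γ
    let D : ℝ := (a * b - c * d) ^ 2 + g ^ 2 * (a + d) * (b + c)
    let f₁ : ℝ := (a * b - c * d) * ((a * b - c * d) + g * (a + d)) / D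
    let f₂ : ℝ := (a * b - c * d) * ((a * b - c * d) - g * (b + c)) / D
    let J : Matrix (Fin 2) (Fin 2) ℝ :=
      !![-α * f₂ + (1 - 2 * f₁) * Γ11, -α * f₁ + (1 - 2 * f₂) * Γ12;
          α * f₂ + (1 - 2 * f₁) * Γ21,  α * f₁ + (1 - 2 * f₂) * Γ22]
    f₁ = f₂ ∧
    (∃ C : ℝ, C < 0 ∧ Matrix.trace J = C * γ) ∧
    (Matrix.trace J) ^ 2 - 4 * J.det < 0 ∧
    ∀ μ : ℂ, μ ^ 2 - (Matrix.trace J : ℝ) * μ + (J.det : ℝ) = 0 →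
      μ.im ≠ 0 ∧ (μ.re < 0 ↔ 0 < γ) ∧ (0 < μ.re ↔ γ < 0) := by
  intro a b c d g Γ12 Γ21 Γ11 Γ22 α D f₁ f₂ J
  have hf : f₁ = f₂ := coexistence_eq_of_add_eq_zero (by norm_num [a, b, c, d])
  have hf₂ : f₂ = 19 / 79 := by norm_num [f₂, D, a, b, c, d, g]
  have htr : J.trace = -(41 / 395) * γ := by
    rw [show J.trace = (1 - 2 * f₂) * (Γ11 + Γ22) by
      simpa only [J, hf] using trace_jacobian_of_eq α Γ11 Γ12 Γ21 Γ22 f₂]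
    simp only [hf₂, Γ11, Γ22, c, d]
    ring
  have hdet : J.det = (31939 / 7900) * γ ^ 2 := by
    simp only [J, Matrix.det_fin_two_of, hf, hf₂, α, Γ11, Γ12, Γ21, Γ22, a, b, c, d, g]
    ring
  have hdisc : J.trace ^ 2 - 4 * J.det < 0 := by
    rw [htr, hdet]
    nlinarith [sq_pos_of_ne_zero hγ]
  refine ⟨hf, ⟨-(41 / 395), by norm_num, htr⟩, hdisc, fun μ hμ => ?_⟩
  obtain ⟨him, hre⟩ := Complex.im_ne_zero_and_re_eq_of_quadratic_eq_zero hdisc hμ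
  rw [htr] at hre
  exact ⟨him, by constructor <;> intro <;> linarith, by constructor <;> intro <;> linarith⟩
end
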